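/- Fix a real number t₁₂ and s ∈ ℂ, and natural numbers n₁, n₂. For every pair of reals (u, v) with u·v − t₁₂² > 0, the mixed iterated partial derivative ∂_u^{n₁}∂_v^{n₂} at (u,v) of the function (u,v) ↦ (u·v − t₁₂²)^{−s} equals Σ_{k=0}^{min(n₁,n₂)} k! · C(n₁,k) · C(n₂,k) · (−1)^{n₁+n₂+k} · u^{n₂−k} · v^{n₁−k} · (u·v − t₁₂²)^{−(s+n₁+n₂−k)} · Π_{l=0}^{n₁+n₂−k−1}(s+l). -/

import Mathlib

/-!
For fixed `u`, the function `v ↦ (uv - t²)^{-s}` is a complex power of an affine function, so its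
`n₂`-th derivative is `(-1)^{n₂} (s)_{n₂} u^{n₂} (uv - t²)^{-(s+n₂)}`, with `(s)_n` the rising
factorial. Differentiating this `n₁` times in `u` by the Leibniz rule, the factor `u^{n₂}` contributes
`n₂!/(n₂-k)! · u^{n₂-k}` and the power of `uv - t²` contributes the same formula with `v` as slope;
the rising factorials concatenate to `(s)_{n₁+n₂-k}`.
-/

open Finset

lemma prod_range_add_natCast {R : Type*} [CommSemiring R] (s : R) (m n : ℕ) :
    ∏ l ∈ range (m + n), (s + l) = (∏ l ∈ range m, (s + l)) * ∏ l ∈ range n, (s + m + l) := by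
  rw [prod_range_add]
  push_cast
  simp only [add_assoc]

lemma iteratedDeriv_ofReal_comp {n : ℕ} {f : ℝ → ℝ} {x : ℝ} (hf : ContDiffAt ℝ n f x) :
    iteratedDeriv n (fun y => (f y : ℂ)) x = iteratedDeriv n f x := by
  simp only [iteratedDeriv_eq_iteratedFDeriv]
  rw [show (fun y => (f y : ℂ)) = Complex.ofRealCLM ∘ f from rfl,
    Complex.ofRealCLM.iteratedFDeriv_comp_left hf le_rfl]
  simp

lemma iteratedDeriv_ofReal_pow (k m : ℕ) (x : ℝ) :
    iteratedDeriv k (fun y : ℝ => (y : ℂ) ^ m) x = m.descFactorial k * (x : ℂ) ^ (m - k) := by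
  simp_rw [← Complex.ofReal_pow]
  rw [iteratedDeriv_ofReal_comp (by fun_prop)]
  simp

section AffineCpow

variable {a c x : ℝ}

lemma isOpen_setOf_pos_affine (a c : ℝ) : IsOpen {y : ℝ | 0 < a * y - c} :=
  isOpen_lt continuous_const (by fun_prop)

lemma contDiffAt_ofReal_affine_cpow {n : WithTop ℕ∞} (z : ℂ) (hx : 0 < a * x - c) :
    ContDiffAt ℝ n (fun y : ℝ => ((a * y - c : ℝ) : ℂ) ^ z) x := by
  have hpow : AnalyticAt ℂ (fun w : ℂ => w ^ z) ((a * x - c : ℝ) : ℂ) :=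
    analyticAt_id.cpow analyticAt_const (Complex.ofReal_mem_slitPlane.2 hx)
  have haff : ContDiffAt ℝ n (fun y : ℝ => ((a * y - c : ℝ) : ℂ)) x :=
    Complex.ofRealCLM.contDiff.contDiffAt.comp x
      ((contDiffAt_const.mul contDiffAt_id).sub contDiffAt_const)
  exact hpow.restrictScalars.contDiffAt.comp x haff

lemma hasDerivAt_ofReal_affine_cpow (z : ℂ) (hx : 0 < a * x - c) :
    HasDerivAt (fun y : ℝ => ((a * y - c : ℝ) : ℂ) ^ z)
      (z * ((a * x - c : ℝ) : ℂ) ^ (z - 1) * a) x := by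
  have haff : HasDerivAt (fun y : ℝ => ((a * y - c : ℝ) : ℂ)) (a : ℂ) x := by
    simpa using (((hasDerivAt_id x).const_mul a).sub_const c).ofReal_comp
  exact (Complex.hasStrictDerivAt_cpow_const (Complex.ofReal_mem_slitPlane.2 hx)).hasDerivAt.comp
    x haff

lemma iteratedDeriv_ofReal_affine_cpow_neg (n : ℕ) (w : ℂ) (hx : 0 < a * x - c) :
    iteratedDeriv n (fun y : ℝ => ((a * y - c : ℝ) : ℂ) ^ (-w)) x
      = (-1) ^ n * (a : ℂ) ^ n * (∏ l ∈ range n, (w + l))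
        * ((a * x - c : ℝ) : ℂ) ^ (-(w + n)) := by
  induction n generalizing w x with
  | zero => simp
  | succ n ih =>
    have hderiv : deriv (fun y : ℝ => ((a * y - c : ℝ) : ℂ) ^ (-w))
        =ᶠ[nhds x] fun y => (-w * a) * ((a * y - c : ℝ) : ℂ) ^ (-(w + 1)) := by
      filter_upwards [(isOpen_setOf_pos_affine a c).mem_nhds hx] with y hy
      rw [(hasDerivAt_ofReal_affine_cpow (-w) hy).deriv, show -w - 1 = -(w + 1) by ring]
      ring
    rw [iteratedDeriv_succ', hderiv.iteratedDeriv_eq, iteratedDeriv_const_mul_field, ih _ hx,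
      prod_range_succ']
    push_cast
    ring_nf

lemma iteratedDerivWithin_ofReal_affine_cpow_neg (n : ℕ) (w : ℂ) (hx : 0 < a * x - c) :
    iteratedDerivWithin n (fun y : ℝ => ((a * y - c : ℝ) : ℂ) ^ (-w)) {y | 0 < a * y - c} x
      = (-1) ^ n * (a : ℂ) ^ n * (∏ l ∈ range n, (w + l))
        * ((a * x - c : ℝ) : ℂ) ^ (-(w + n)) := by
  rw [iteratedDerivWithin_of_isOpen (isOpen_setOf_pos_affine a c) hx,
    iteratedDeriv_ofReal_affine_cpow_neg n w hx]

lemma iteratedDeriv_ofReal_pow_mul_affine_cpow_neg (n m : ℕ) (w : ℂ) (hx : 0 < a * x - c) :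
    iteratedDeriv n (fun y : ℝ => (y : ℂ) ^ m * ((a * y - c : ℝ) : ℂ) ^ (-w)) x
      = ∑ k ∈ range (min n m + 1), (k.factorial : ℂ) * n.choose k * m.choose k
          * (x : ℂ) ^ (m - k) * ((-1) ^ (n - k) * (a : ℂ) ^ (n - k)
            * (∏ l ∈ range (n - k), (w + l)) * ((a * x - c : ℝ) : ℂ) ^ (-(w + (n - k : ℕ)))) := by
  have hpow : ContDiffAt ℝ n (fun y : ℝ => (y : ℂ) ^ m) x :=
    (Complex.ofRealCLM.contDiff.pow m).contDiffAt
  rw [iteratedDeriv_fun_mul hpow (contDiffAt_ofReal_affine_cpow _ hx)]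
  have hsub : range (min n m + 1) ⊆ range (n + 1) := range_subset_range.2 (by omega)
  rw [← sum_subset hsub fun k hk hk' => by
    have hmk : m < k := by simp only [mem_range] at hk hk'; omega
    rw [iteratedDeriv_ofReal_pow, Nat.descFactorial_eq_zero_iff_lt.2 hmk]
    simp]
  refine sum_congr rfl fun k _ => ?_
  rw [iteratedDeriv_ofReal_pow, iteratedDeriv_ofReal_affine_cpow_neg _ _ hx,
    Nat.descFactorial_eq_factorial_mul_choose, Nat.cast_mul]
  ring

end AffineCpow

theorem iteratedDeriv_det_pow_mixed (t12 : ℝ) (s : ℂ) (n1 n2 : ℕ) (u v : ℝ)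
    (huv : 0 < u * v - t12 ^ 2) :
    iteratedDerivWithin n1
      (fun u' : ℝ =>
        iteratedDerivWithin n2
          (fun v' : ℝ => ((u' * v' - t12 ^ 2 : ℝ) : ℂ) ^ (-s))
          {v' : ℝ | 0 < u' * v' - t12 ^ 2} v)
      {u' : ℝ | 0 < u' * v - t12 ^ 2} u =
    ∑ k ∈ Finset.range (min n1 n2 + 1),
      (k.factorial : ℂ) * (n1.choose k : ℂ) * (n2.choose k : ℂ) * (-1) ^ (n1 + n2 + k) *
        (u : ℂ) ^ (n2 - k) * (v : ℂ) ^ (n1 - k) *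
        ((u * v - t12 ^ 2 : ℝ) : ℂ) ^ (-(s + ((n1 + n2 - k : ℕ) : ℂ))) *
        ∏ l ∈ Finset.range (n1 + n2 - k), (s + l) := by
  simp_rw [mul_comm _ v] at huv ⊢
  have hinner : Set.EqOn
      (fun u' : ℝ => iteratedDerivWithin n2 (fun v' : ℝ => ((u' * v' - t12 ^ 2 : ℝ) : ℂ) ^ (-s))
          {v' : ℝ | 0 < u' * v' - t12 ^ 2} v)
      (fun u' : ℝ => ((-1) ^ n2 * ∏ l ∈ range n2, (s + l)) *
        ((u' : ℂ) ^ n2 * ((v * u' - t12 ^ 2 : ℝ) : ℂ) ^ (-(s + n2))))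
      {u' : ℝ | 0 < v * u' - t12 ^ 2} := fun u' hu' => by
    dsimp only
    rw [iteratedDerivWithin_ofReal_affine_cpow_neg n2 s (by rw [mul_comm]; exact hu'), mul_comm u']
    ring
  rw [iteratedDerivWithin_congr hinner huv,
    iteratedDerivWithin_of_isOpen (isOpen_setOf_pos_affine _ _) huv,
    iteratedDeriv_const_mul_field, iteratedDeriv_ofReal_pow_mul_affine_cpow_neg _ _ _ huv, mul_sum]
  refine sum_congr rfl fun k hk => ?_
  have hkn : k ≤ n1 := by simp only [mem_range] at hk; omega
  rw [show n1 + n2 - k = n2 + (n1 - k) by omega, prod_range_add_natCast,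
    show n1 + n2 + k = n2 + (n1 - k) + 2 * k by omega, pow_add, pow_add, pow_mul,
    neg_one_sq, one_pow, Nat.cast_add, ← add_assoc]
  ring
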